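/- arXiv:1710.01891 — 2 statements merged into one kernel-verified Lean document; each statement's English description precedes it below -/
import Mathlib

section
/- Let f : A ⇀ B be a partial function. Then the following are equivalent: (1) for every set C and every partial function g : C ⇀ A, if rank(g⬝f) = rank(g) then dom(g⬝f) = dom(g) and ker(g⬝f) = ker(g) (i.e., f is R-stable in the category of partial functions); (2) ran(f) is finite, or f is both full (dom(f) = A) and injective. -/
/-!
A rank-preserving composite `g⬝f` loses no point of `dom g` and merges no two values of `g` as soon
as `f` is defined and injective on `ran g`. This is automatic when `f` is full and injective; when
`ran f` is finite, `ran g` is finite too and counting forces it (the values of `f` on `ran g` are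
at most `|ran g ∩ dom f|` many).

Conversely, if `ran f` is infinite, compose `f` with a section `s` of `f` over `ran f` extended by
one more point `a`: by absorption the rank is preserved. R-stability then puts `a` in `dom f`, and,
taking `s` through `x₁` at a value `y ∈ f x₁ ∩ f x₂` and `a = x₂`, it forces `x₁ = x₂`.
-/

universe u

/-- The kernel of a partial function, as a binary relation: `x` and `y` are related iff both lie
in the domain and have the same value. -/
def pker {α β : Type*} (f : α →. β) : α → α → Prop :=
  fun x y => x ∈ f.Dom ∧ y ∈ f.Dom ∧ f x = f y

open Cardinal Set

namespace PFun

variable {α β γ : Type*}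

def InjOn (f : α →. β) (s : Set α) : Prop :=
  ∀ ⦃a₁⦄, a₁ ∈ s → ∀ ⦃a₂⦄, a₂ ∈ s → ∀ ⦃b⦄, b ∈ f a₁ → b ∈ f a₂ → a₁ = a₂

theorem mem_comp_iff {f : β →. γ} {g : α →. β} {a : α} {c : γ} :
    c ∈ f.comp g a ↔ ∃ b ∈ g a, c ∈ f b :=
  Part.mem_bind_iff

theorem comp_coe_apply (f : β →. γ) (φ : α → β) (a : α) : f.comp φ a = f (φ a) :=
  Part.bind_some _ _

theorem ran_coe (φ : α → β) : (φ : α →. β).ran = range φ := by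
  ext b
  simp [ran, coe_val, eq_comm]

theorem ran_comp (f : β →. γ) (g : α →. β) : (f.comp g).ran = f.image g.ran := by
  ext c
  simp only [ran, mem_image, mem_comp_iff, mem_ofPred_eq]
  constructor
  · rintro ⟨a, b, hb, hc⟩
    exact ⟨b, ⟨a, hb⟩, hc⟩
  · rintro ⟨b, ⟨a, hb⟩, hc⟩
    exact ⟨a, b, hb, hc⟩

theorem image_subset_ran (f : α →. β) (s : Set α) : f.image s ⊆ f.ran :=
  fun _ hb ↦ let ⟨a, _, hb⟩ := (f.mem_image _ _).1 hb; ⟨a, hb⟩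

theorem image_eq_image_asSubtype (f : α →. β) (s : Set α) :
    f.image s = f.asSubtype '' (Subtype.val ⁻¹' s) := by
  ext b
  rw [mem_image]
  constructor
  · rintro ⟨a, ha, hb⟩
    have hd : a ∈ f.Dom := (f.mem_dom a).2 ⟨b, hb⟩
    exact ⟨⟨a, hd⟩, ha, asSubtype_eq_of_mem hb hd⟩
  · rintro ⟨⟨a, hd⟩, ha, rfl⟩
    exact ⟨a, ha, Part.get_mem hd⟩

theorem mk_image_le {α β : Type u} (f : α →. β) (s : Set α) : #(f.image s) ≤ #s := by
  rw [image_eq_image_asSubtype]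
  exact Cardinal.mk_image_le.trans (mk_preimage_of_injective _ _ Subtype.val_injective)

theorem subset_dom_and_injOn_of_ncard_image_eq {f : α →. β} {s : Set α} (hs : s.Finite)
    (h : (f.image s).ncard = s.ncard) : s ⊆ f.Dom ∧ f.InjOn s := by
  set t : Set f.Dom := Subtype.val ⁻¹' s
  have ht : t.Finite := hs.preimage Subtype.val_injective.injOn
  have himage : (f.asSubtype '' t).ncard = s.ncard := by rw [← image_eq_image_asSubtype, h]
  have hle_t : (f.asSubtype '' t).ncard ≤ t.ncard := ncard_image_le ht
  have ht_eq : t.ncard = (s ∩ f.Dom).ncard := by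
    rw [← ncard_image_of_injective t Subtype.val_injective, Subtype.image_preimage_coe, inter_comm]
  have hle_s : (s ∩ f.Dom).ncard ≤ s.ncard := ncard_le_ncard inter_subset_left hs
  have hdom : s ⊆ f.Dom := by
    rw [← eq_of_subset_of_ncard_le (inter_subset_left : s ∩ f.Dom ⊆ s) (by omega) hs]
    exact inter_subset_right
  have hinj : Set.InjOn f.asSubtype t := injOn_of_ncard_image_eq (by omega) ht
  refine ⟨hdom, fun a₁ h₁ a₂ h₂ b hb₁ hb₂ ↦ ?_⟩
  exact congrArg Subtype.val <| hinj (x₁ := ⟨a₁, hdom h₁⟩) h₁ (x₂ := ⟨a₂, hdom h₂⟩) h₂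
    (by rw [asSubtype_eq_of_mem hb₁, asSubtype_eq_of_mem hb₂])

theorem dom_comp_eq_of_ran_subset {f : β →. γ} {g : α →. β} (h : g.ran ⊆ f.Dom) :
    (f.comp g).Dom = g.Dom := by
  ext a
  simp only [mem_dom, mem_comp_iff]
  constructor
  · rintro ⟨c, b, hb, -⟩
    exact ⟨b, hb⟩
  · rintro ⟨b, hb⟩
    obtain ⟨c, hc⟩ := (f.mem_dom b).1 (h ⟨a, hb⟩)
    exact ⟨c, b, hb, hc⟩

theorem pker_comp_eq {f : β →. γ} {g : α →. β} (hdom : g.ran ⊆ f.Dom) (hinj : f.InjOn g.ran) :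
    pker (f.comp g) = pker g := by
  have hDom := dom_comp_eq_of_ran_subset hdom
  ext a₁ a₂
  simp only [pker, hDom]
  refine and_congr_right fun h₁ ↦ and_congr_right fun h₂ ↦ ⟨fun h ↦ ?_, fun h ↦ ?_⟩
  · obtain ⟨c, hc⟩ := (mem_dom _ a₁).1 (hDom ▸ h₁)
    obtain ⟨b₁, hb₁, hc₁⟩ := mem_comp_iff.1 hc
    obtain ⟨b₂, hb₂, hc₂⟩ := mem_comp_iff.1 (h ▸ hc)
    rw [Part.eq_some_iff.2 hb₁, Part.eq_some_iff.2 hb₂, hinj ⟨a₁, hb₁⟩ ⟨a₂, hb₂⟩ hc₁ hc₂]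
  · rw [comp_apply, comp_apply, h]

theorem pker_coe_iff (φ : α → β) {a₁ a₂ : α} : pker (φ : α →. β) a₁ a₂ ↔ φ a₁ = φ a₂ := by
  simp [pker, dom_coe, coe_val]

end PFun

open PFun

section RStable

variable {A B : Type u}

def IsRStable (f : A →. B) : Prop :=
  ∀ (C : Type u) (g : C →. A), #(f.comp g).ran = #g.ran →
    (f.comp g).Dom = g.Dom ∧ pker (f.comp g) = pker g

theorem IsRStable.of_subset_dom_and_injOn {f : A →. B}
    (h : ∀ (C : Type u) (g : C →. A), #(f.comp g).ran = #g.ran → g.ran ⊆ f.Dom ∧ f.InjOn g.ran) :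
    IsRStable f := fun C g hrank ↦
  let ⟨hdom, hinj⟩ := h C g hrank
  ⟨dom_comp_eq_of_ran_subset hdom, pker_comp_eq hdom hinj⟩

theorem isRStable_of_ran_finite {f : A →. B} (hf : f.ran.Finite) : IsRStable f := by
  refine .of_subset_dom_and_injOn fun C g hrank ↦ ?_
  rw [ran_comp] at hrank
  have hfin : g.ran.Finite := by
    rw [← lt_aleph0_iff_set_finite, ← hrank, lt_aleph0_iff_set_finite]
    exact hf.subset (image_subset_ran f _)
  exact subset_dom_and_injOn_of_ncard_image_eq hfin (congrArg toNat hrank)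

theorem isRStable_of_dom_eq_univ_of_injOn {f : A →. B} (hdom : f.Dom = Set.univ)
    (hinj : f.InjOn Set.univ) : IsRStable f :=
  .of_subset_dom_and_injOn fun _ _ _ ↦ ⟨hdom ▸ subset_univ _, fun _ _ _ _ ↦ hinj trivial trivial⟩

/-- The extra point `φ none` costs nothing in rank because `#(Option f.ran) = #f.ran`. -/
theorem mk_ran_comp_coe_eq {f : A →. B} (hf : f.ran.Infinite) {φ : Option f.ran → A}
    (hφ : ∀ b, ↑b ∈ f (φ (some b))) : #(f.comp (PFun.lift φ)).ran = #(PFun.lift φ).ran := by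
  have hran : (f.comp (PFun.lift φ)).ran = f.ran := by
    refine subset_antisymm (ran_comp f _ ▸ image_subset_ran f _) fun b hb ↦ ⟨some ⟨b, hb⟩, ?_⟩
    rw [comp_coe_apply]
    exact hφ _
  refine le_antisymm (ran_comp f (PFun.lift φ) ▸ PFun.mk_image_le f _) ?_
  calc #(PFun.lift φ).ran = #(range φ) := by rw [ran_coe]
    _ ≤ #(Option f.ran) := mk_range_le
    _ = #f.ran := by rw [mk_option, add_one_of_aleph0_le (infinite_iff.1 hf.to_subtype)]
    _ = #(f.comp (PFun.lift φ)).ran := by rw [hran]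

theorem IsRStable.dom_eq_univ {f : A →. B} (hf : IsRStable f) (hinf : f.ran.Infinite) :
    f.Dom = Set.univ := by
  choose s hs using fun b : f.ran ↦ b.2
  refine eq_univ_of_forall fun a ↦ ?_
  let φ : Option f.ran → A := fun o ↦ o.elim a s
  have hdom := (hf _ (PFun.lift φ) (mk_ran_comp_coe_eq hinf (φ := φ) hs)).1
  have hnone : none ∈ (f.comp (PFun.lift φ)).Dom := by
    rw [hdom, dom_coe]
    exact mem_univ none
  rwa [mem_dom, ← Part.dom_iff_mem, comp_coe_apply] at hnone

theorem IsRStable.injOn_univ {f : A →. B} (hf : IsRStable f) (hinf : f.ran.Infinite) :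
    f.InjOn Set.univ := by
  classical
  intro x₁ _ x₂ _ y h₁ h₂
  choose s hs using fun b : f.ran ↦ b.2
  let y' : f.ran := ⟨y, x₁, h₁⟩
  let φ : Option f.ran → A := fun o ↦ o.elim x₂ (Function.update s y' x₁)
  have hφ : ∀ b, ↑b ∈ f (φ (some b)) := by
    intro b
    by_cases hb : b = y'
    · subst hb
      simpa [φ] using h₁
    · simpa [φ, hb] using hs b
  have hker := (hf _ (PFun.lift φ) (mk_ran_comp_coe_eq hinf hφ)).2
  have hy₁ : f.comp (PFun.lift φ) (some y') = Part.some y := by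
    rw [comp_coe_apply]
    simpa [φ, y'] using Part.eq_some_iff.2 h₁
  have hy₂ : f.comp (PFun.lift φ) none = Part.some y := by
    rw [comp_coe_apply]
    exact Part.eq_some_iff.2 h₂
  have hrel : pker (f.comp (PFun.lift φ)) (some y') none :=
    ⟨(mem_dom _ _).2 ⟨y, hy₁ ▸ Part.mem_some y⟩, (mem_dom _ _).2 ⟨y, hy₂ ▸ Part.mem_some y⟩,
      hy₁.trans hy₂.symm⟩
  rw [hker, pker_coe_iff] at hrel
  simpa [φ] using hrel

end RStable

/-- A partial function `f : A ⇀ B` is R-stable (i.e. for every `g : C ⇀ A`,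
`rank (g⬝f) = rank g` implies `dom (g⬝f) = dom g` and `ker (g⬝f) = ker g`) iff
`ran f` is finite, or `f` is full (`dom f = A`) and injective. -/
theorem R_stable_iff_PT {A B : Type u} (f : A →. B) :
    (∀ (C : Type u) (g : C →. A),
        Cardinal.mk ↥(f.comp g).ran = Cardinal.mk ↥g.ran →
          ((f.comp g).Dom = g.Dom ∧ pker (f.comp g) = pker g)) ↔
      (f.ran.Finite ∨
        (f.Dom = Set.univ ∧ ∀ x₁ x₂ : A, ∀ y : B, y ∈ f x₁ → y ∈ f x₂ → x₁ = x₂)) := by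
  change IsRStable f ↔ _
  refine ⟨fun hf ↦ or_iff_not_imp_left.2 fun hinf ↦ ?_, ?_⟩
  · exact ⟨hf.dom_eq_univ hinf, fun _ _ _ h₁ h₂ ↦ hf.injOn_univ hinf trivial trivial h₁ h₂⟩
  · rintro (hfin | ⟨hdom, hinj⟩)
    · exact isRStable_of_ran_finite hfin
    · exact isRStable_of_dom_eq_univ_of_injOn hdom fun a₁ _ a₂ _ _ ↦ hinj a₁ a₂ _
end

section
/- Fix sets X, Y and a partial function a : Y ⇀ X, and let f : X ⇀ Y. Then there exists h : X ⇀ Y with f = h⬝a⬝f (equivalently, a⬝f is L-related to f in the sandwich semigroup sense, f ∈ P₂ᵃ) if and only if ran(a) saturates ker(f), i.e., for every x ∈ dom(f) there exists y ∈ ran(a) with y ∈ dom(f) and f(y) = f(x). Moreover these conditions are equivalent to: ran(a⬝f) = ran(f). -/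
/-!
Precomposing `f` with `g` can only shrink its range, and `ran (g⬝f) = ran f` holds precisely when
every value of `f` is attained on `ran g`. If `f = h⬝g⬝f`, then `ran f ⊆ ran ((h⬝g)⬝f) ⊆ ran (g⬝f)`,
so `ran g` saturates `ker f`. Conversely, choosing for each `x ∈ dom f` a `g`-preimage of a point
of `ran g` in the kernel class of `x` defines `h` on `dom f` such that `h⬝g` keeps every point of
`dom f` inside its kernel class, whence `f = h⬝g⬝f`. (Here `g⬝f` is `f.comp g`.)
-/

namespace PFun

variable {α β γ : Type*}

def SaturatesKer (s : Set α) (f : α →. β) : Prop :=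
  ∀ x ∈ f.Dom, ∃ y ∈ s, y ∈ f.Dom ∧ f y = f x

theorem SaturatesKer.mono {s t : Set α} {f : α →. β} (hst : s ⊆ t) (hs : SaturatesKer s f) :
    SaturatesKer t f := fun x hx =>
  let ⟨y, hys, hy⟩ := hs x hx
  ⟨y, hst hys, hy⟩

theorem mem_comp {f : β →. γ} {g : α →. β} {x : α} {z : γ} :
    z ∈ f.comp g x ↔ ∃ y ∈ g x, z ∈ f y :=
  Part.mem_bind_iff

theorem ran_comp_subset (f : β →. γ) (g : α →. β) : (f.comp g).ran ⊆ f.ran := by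
  rintro z ⟨x, hz⟩
  obtain ⟨y, -, hzy⟩ := mem_comp.1 hz
  exact ⟨y, hzy⟩

theorem ran_subset_ran_comp_iff (f : β →. γ) (g : α →. β) :
    f.ran ⊆ (f.comp g).ran ↔ SaturatesKer g.ran f := by
  constructor
  · intro hran x hx
    obtain ⟨w, hw⟩ := hran ⟨x, Part.get_mem hx⟩
    obtain ⟨y, hyg, hy⟩ := mem_comp.1 hw
    exact ⟨y, ⟨w, hyg⟩, Part.dom_iff_mem.2 ⟨_, hy⟩,
      (Part.eq_some_iff.2 hy).trans (Part.eq_some_iff.2 (Part.get_mem hx)).symm⟩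
  · rintro hsat z ⟨x, hz⟩
    obtain ⟨y, ⟨w, hyw⟩, -, hfy⟩ := hsat x (Part.dom_iff_mem.2 ⟨z, hz⟩)
    exact ⟨w, mem_comp.2 ⟨y, hyw, hfy ▸ hz⟩⟩

theorem ran_comp_eq_iff (f : β →. γ) (g : α →. β) :
    (f.comp g).ran = f.ran ↔ SaturatesKer g.ran f := by
  rw [Set.Subset.antisymm_iff, and_iff_right (ran_comp_subset f g), ran_subset_ran_comp_iff]

theorem eq_comp_of_mem_ker {f : α →. β} {k : α →. α} (hdom : f.Dom ⊆ k.Dom)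
    (hker : ∀ x, ∀ y ∈ k x, f y = f x) : f = f.comp k := by
  ext x z
  rw [mem_comp]
  constructor
  · intro hz
    have hx : x ∈ k.Dom := hdom (Part.dom_iff_mem.2 ⟨z, hz⟩)
    exact ⟨_, Part.get_mem hx, hker x _ (Part.get_mem hx) ▸ hz⟩
  · rintro ⟨y, hy, hzy⟩
    exact hker x y hy ▸ hzy

theorem exists_eq_comp_comp_iff (f : β →. γ) (g : α →. β) :
    (∃ h : β →. α, f = f.comp (g.comp h)) ↔ SaturatesKer g.ran f := by
  constructor
  · rintro ⟨h, hf⟩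
    refine SaturatesKer.mono (ran_comp_subset g h) ?_
    rw [← ran_subset_ran_comp_iff, ← hf]
  · intro hsat
    choose y hyg hyf using fun x (hx : x ∈ f.Dom) => hsat x hx
    choose w hw using hyg
    refine ⟨fun x => ⟨x ∈ f.Dom, w x⟩, eq_comp_of_mem_ker ?_ ?_⟩
    · intro x hx
      exact ⟨hx, Part.dom_iff_mem.2 ⟨y x hx, hw x hx⟩⟩
    · rintro x y' hy'
      obtain ⟨w', ⟨hx, rfl⟩, hy'w⟩ := mem_comp.1 hy'
      rw [Part.mem_unique hy'w (hw x hx)]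
      exact (hyf x hx).2

end PFun

/-- Fix `a : Y ⇀ X` and `f : X ⇀ Y`.  Then `f ∈ P₂ᵃ`, i.e. there exists
`h : X ⇀ Y` with `f = h⬝a⬝f`, iff `ran a` saturates `ker f` (every kernel class of `f` contains a
point of `ran a`); and these conditions are in turn equivalent to `ran (a⬝f) = ran f`. -/
theorem P2a_iff_PT {X Y : Type*} (a : Y →. X) (f : X →. Y) :
    ((∃ h : X →. Y, f = f.comp (a.comp h)) ↔
        (∀ x ∈ f.Dom, ∃ y ∈ a.ran, y ∈ f.Dom ∧ f y = f x)) ∧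
    ((∀ x ∈ f.Dom, ∃ y ∈ a.ran, y ∈ f.Dom ∧ f y = f x) ↔
        (f.comp a).ran = f.ran) :=
  ⟨PFun.exists_eq_comp_comp_iff f a, (PFun.ran_comp_eq_iff f a).symm⟩
end
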